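/- Let n ≥ 2, a ≥ 1, let D ⊊ ℝⁿ be a domain, let α be an a-cone arc in D joining x and y, and let s₀ ∈ α bisect α, i.e. ℓ(α[x,s₀]) = ℓ(α[s₀,y]). Then for all s₁, s₂ ∈ α[x,s₀] (and likewise for all s₁, s₂ ∈ α[s₀,y]), one has k_D(s₁,s₂) ≤ ℓ_k(α[s₁,s₂]) ≤ 4a²·k_D(s₁,s₂) + 4a². (This is Lemma 3.13.) -/

import Mathlib

open Set Metric MeasureTheory

noncomputable section

/-- Distance from a point to the boundary of `D`, i.e. to its complement. -/
def distBd {n : ℕ} (D : Set (EuclideanSpace ℝ (Fin n))) (z : EuclideanSpace ℝ (Fin n)) : ℝ :=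
  infDist z Dᶜ

/-- A domain in ℝⁿ: a nonempty, open, connected, proper subset. -/
def IsProperDomain {n : ℕ} (D : Set (EuclideanSpace ℝ (Fin n))) : Prop :=
  IsOpen D ∧ IsConnected D ∧ D ≠ univ

/-- A rectifiable arc in `D`, parametrized by arclength on `[0, len]`:
the length of the subarc between parameters `s ≤ t` is exactly `t - s`. -/
structure Arc (n : ℕ) (D : Set (EuclideanSpace ℝ (Fin n))) where
  len : ℝ
  len_nonneg : 0 ≤ len
  toFun : ℝ → EuclideanSpace ℝ (Fin n)
  injOn : InjOn toFun (Icc 0 len)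
  mem : ∀ t ∈ Icc 0 len, toFun t ∈ D
  unitSpeed : ∀ s ∈ Icc 0 len, ∀ t ∈ Icc 0 len, s ≤ t →
    eVariationOn toFun (Icc s t) = ENNReal.ofReal (t - s)

namespace Arc

variable {n : ℕ} {D : Set (EuclideanSpace ℝ (Fin n))}

/-- The arc `γ` joins `x` to `y`. -/
def Joins (γ : Arc n D) (x y : EuclideanSpace ℝ (Fin n)) : Prop :=
  γ.toFun 0 = x ∧ γ.toFun γ.len = y

/-- Quasihyperbolic length of the subarc of `γ` between parameters `u` and `v`:
`∫ |dz| / d(z)` along the (unit-speed) subarc. -/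
def qhLen (γ : Arc n D) (u v : ℝ) : ℝ :=
  ∫ t in u..v, 1 / distBd D (γ.toFun t)

end Arc

/-- Quasihyperbolic distance in `D`. -/
def qhDist {n : ℕ} (D : Set (EuclideanSpace ℝ (Fin n))) (x y : EuclideanSpace ℝ (Fin n)) : ℝ :=
  sInf { r | ∃ γ : Arc n D, γ.Joins x y ∧ r = γ.qhLen 0 γ.len }

/-- Inner (internal) distance in `D`: infimum of lengths of arcs joining the two points. -/
def innerDist {n : ℕ} (D : Set (EuclideanSpace ℝ (Fin n))) (x y : EuclideanSpace ℝ (Fin n)) : ℝ :=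
  sInf { r | ∃ γ : Arc n D, γ.Joins x y ∧ r = γ.len }

namespace Arc

variable {n : ℕ} {D : Set (EuclideanSpace ℝ (Fin n))}

/-- `γ` is a quasihyperbolic geodesic: its quasihyperbolic length realizes the
quasihyperbolic distance between its endpoints. -/
def IsGeodesic (γ : Arc n D) : Prop :=
  γ.qhLen 0 γ.len = qhDist D (γ.toFun 0) (γ.toFun γ.len)

/-- `γ` is a `c`-cone arc: `min (ℓ(γ[z₁,z]), ℓ(γ[z₂,z])) ≤ c·d(z)` for all `z ∈ γ`. -/
def IsConeArc (γ : Arc n D) (c : ℝ) : Prop :=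
  ∀ t ∈ Icc 0 γ.len, min t (γ.len - t) ≤ c * distBd D (γ.toFun t)

end Arc

/-- `D` is an `a`-John domain. -/
def IsJohn {n : ℕ} (D : Set (EuclideanSpace ℝ (Fin n))) (a : ℝ) : Prop :=
  ∀ x ∈ D, ∀ y ∈ D, ∃ γ : Arc n D, γ.Joins x y ∧ γ.IsConeArc a

/-- `D` is a `c`-uniform domain. -/
def IsUniform {n : ℕ} (D : Set (EuclideanSpace ℝ (Fin n))) (c : ℝ) : Prop :=
  ∀ x ∈ D, ∀ y ∈ D, ∃ γ : Arc n D, γ.Joins x y ∧ γ.IsConeArc c ∧ γ.len ≤ c * dist x y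

/-- `f : D → D'` is an `(M,C)`-CQH homeomorphism (a homeomorphism of `D` onto `D'`
satisfying the coarse quasihyperbolic bi-Lipschitz condition). -/
def IsCQH {n : ℕ} (D D' : Set (EuclideanSpace ℝ (Fin n)))
    (f : EuclideanSpace ℝ (Fin n) → EuclideanSpace ℝ (Fin n)) (M C : ℝ) : Prop :=
  ContinuousOn f D ∧ BijOn f D D' ∧
  ∀ x ∈ D, ∀ y ∈ D,
    (qhDist D x y - C) / M ≤ qhDist D' (f x) (f y) ∧
    qhDist D' (f x) (f y) ≤ M * qhDist D x y + C

/-! On the first half of a cone arc the cone condition reads `t ≤ a·d(α t)`. Up to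
`m = s₁ + d(α s₁)/2` the distance to the boundary stays above `d(α s₁)/2`, so that piece has
quasihyperbolic length at most `1`. Beyond `m`, `1/d ≤ a/t` integrates to `a log (s₂/m)`; since
`s₂ ≤ a·d(α s₂)` and `m ≥ d(α s₁)/2`, this is at most `a (log (2a) + log (d(α s₂)/d(α s₁)))`,
and `log (d(y)/d(x)) ≤ k_D(x,y)`. The second half is the first half of the reversed arc. -/

lemma distBd_pos {n : ℕ} {D : Set (EuclideanSpace ℝ (Fin n))} (hopen : IsOpen D) (hD : D ≠ univ)
    {z : EuclideanSpace ℝ (Fin n)} (hz : z ∈ D) : 0 < distBd D z :=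
  (hopen.isClosed_compl.notMem_iff_infDist_pos (nonempty_compl.mpr hD)).mp
    (notMem_compl_iff.mpr hz)

lemma distBd_le_add_dist {n : ℕ} (D : Set (EuclideanSpace ℝ (Fin n)))
    (z w : EuclideanSpace ℝ (Fin n)) : distBd D z ≤ distBd D w + dist z w :=
  infDist_le_infDist_add_dist

namespace Arc

variable {n : ℕ} {D : Set (EuclideanSpace ℝ (Fin n))}

lemma dist_toFun_le (γ : Arc n D) {u v : ℝ} (hu : u ∈ Icc 0 γ.len) (hv : v ∈ Icc 0 γ.len)
    (huv : u ≤ v) : dist (γ.toFun u) (γ.toFun v) ≤ v - u := by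
  have h := eVariationOn.edist_le γ.toFun (s := Icc u v) ⟨le_rfl, huv⟩ ⟨huv, le_rfl⟩
  rw [γ.unitSpeed u hu v hv huv, edist_dist] at h
  exact (ENNReal.ofReal_le_ofReal_iff (by linarith)).mp h

lemma lipschitzOnWith (γ : Arc n D) : LipschitzOnWith 1 γ.toFun (Icc 0 γ.len) := by
  refine LipschitzOnWith.of_dist_le_mul fun u hu v hv => ?_
  rw [NNReal.coe_one, one_mul, Real.dist_eq]
  rcases le_total u v with h | h
  · rw [abs_sub_comm]
    exact (γ.dist_toFun_le hu hv h).trans (le_abs_self _)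
  · rw [dist_comm]
    exact (γ.dist_toFun_le hv hu h).trans (le_abs_self _)

lemma intervalIntegrable_inv_distBd (hopen : IsOpen D) (hD : D ≠ univ) (γ : Arc n D)
    {u v : ℝ} (hu : u ∈ Icc 0 γ.len) (hv : v ∈ Icc 0 γ.len) :
    IntervalIntegrable (fun t => 1 / distBd D (γ.toFun t)) volume u v := by
  have hcont : ContinuousOn (fun t => distBd D (γ.toFun t)) (Icc 0 γ.len) :=
    (lipschitz_infDist_pt Dᶜ).continuous.comp_continuousOn γ.lipschitzOnWith.continuousOn
  exact ((continuousOn_const.div hcont fun t ht => (distBd_pos hopen hD (γ.mem t ht)).ne').mono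
    (uIcc_subset_Icc hu hv)).intervalIntegrable

lemma qhLen_nonneg (γ : Arc n D) {u v : ℝ} (huv : u ≤ v) : 0 ≤ γ.qhLen u v :=
  intervalIntegral.integral_nonneg huv fun _ _ => one_div_nonneg.mpr infDist_nonneg

lemma qhLen_add (hopen : IsOpen D) (hD : D ≠ univ) (γ : Arc n D) {u v w : ℝ}
    (hu : u ∈ Icc 0 γ.len) (hv : v ∈ Icc 0 γ.len) (hw : w ∈ Icc 0 γ.len) :
    γ.qhLen u v + γ.qhLen v w = γ.qhLen u w :=
  intervalIntegral.integral_add_adjacent_intervals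
    (γ.intervalIntegrable_inv_distBd hopen hD hu hv)
    (γ.intervalIntegrable_inv_distBd hopen hD hv hw)

def restrict (γ : Arc n D) {u v : ℝ} (hu : u ∈ Icc 0 γ.len) (hv : v ∈ Icc 0 γ.len)
    (huv : u ≤ v) : Arc n D where
  len := v - u
  len_nonneg := by linarith
  toFun t := γ.toFun (u + t)
  injOn s hs t ht h := by
    have := γ.injOn (⟨by linarith [hs.1, hu.1], by linarith [hs.2, hv.2]⟩ : u + s ∈ Icc 0 γ.len)
      (⟨by linarith [ht.1, hu.1], by linarith [ht.2, hv.2]⟩ : u + t ∈ Icc 0 γ.len) h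
    linarith
  mem t ht := γ.mem (u + t) ⟨by linarith [ht.1, hu.1], by linarith [ht.2, hv.2]⟩
  unitSpeed s hs t ht hst := by
    have hmono : MonotoneOn (fun x => u + x) (Icc s t) := fun x _ y _ hxy => by
      simp only; linarith
    rw [show (fun x => γ.toFun (u + x)) = γ.toFun ∘ (fun x => u + x) from rfl,
      eVariationOn.comp_eq_of_monotoneOn γ.toFun _ hmono, image_const_add_Icc,
      γ.unitSpeed (u + s) ⟨by linarith [hs.1, hu.1], by linarith [hs.2, hv.2]⟩
        (u + t) ⟨by linarith [hs.1, hu.1], by linarith [ht.2, hv.2]⟩ (by linarith)]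
    congr 1
    ring

lemma restrict_joins (γ : Arc n D) {u v : ℝ} (hu : u ∈ Icc 0 γ.len)
    (hv : v ∈ Icc 0 γ.len) (huv : u ≤ v) :
    (γ.restrict hu hv huv).Joins (γ.toFun u) (γ.toFun v) :=
  ⟨congrArg γ.toFun (add_zero u), congrArg γ.toFun (add_sub_cancel u v)⟩

lemma qhLen_restrict (γ : Arc n D) {u v : ℝ} (hu : u ∈ Icc 0 γ.len)
    (hv : v ∈ Icc 0 γ.len) (huv : u ≤ v) :
    (γ.restrict hu hv huv).qhLen 0 (v - u) = γ.qhLen u v := by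
  simp only [qhLen, restrict]
  rw [intervalIntegral.integral_comp_add_left (fun x => 1 / distBd D (γ.toFun x)) u, add_zero,
    add_sub_cancel]

def reverse (γ : Arc n D) : Arc n D where
  len := γ.len
  len_nonneg := γ.len_nonneg
  toFun t := γ.toFun (γ.len - t)
  injOn s hs t ht h := by
    have := γ.injOn (⟨by linarith [hs.2], by linarith [hs.1]⟩ : γ.len - s ∈ Icc 0 γ.len)
      (⟨by linarith [ht.2], by linarith [ht.1]⟩ : γ.len - t ∈ Icc 0 γ.len) h
    linarith
  mem t ht := γ.mem (γ.len - t) ⟨by linarith [ht.2], by linarith [ht.1]⟩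
  unitSpeed s hs t ht hst := by
    have hanti : AntitoneOn (fun x => γ.len - x) (Icc s t) := fun x _ y _ hxy =>
      sub_le_sub_left hxy γ.len
    rw [show (fun x => γ.toFun (γ.len - x)) = γ.toFun ∘ (fun x => γ.len - x) from rfl,
      eVariationOn.comp_eq_of_antitoneOn γ.toFun _ hanti, image_const_sub_Icc,
      γ.unitSpeed (γ.len - t) ⟨by linarith [ht.2], by linarith [hs.1]⟩
        (γ.len - s) ⟨by linarith [hs.2], by linarith [hs.1]⟩ (by linarith)]
    congr 1
    ring

@[simp] lemma reverse_len (γ : Arc n D) : γ.reverse.len = γ.len := rfl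

@[simp] lemma reverse_toFun (γ : Arc n D) (t : ℝ) :
    γ.reverse.toFun t = γ.toFun (γ.len - t) := rfl

lemma Joins.reverse {γ : Arc n D} {x y : EuclideanSpace ℝ (Fin n)} (h : γ.Joins x y) :
    γ.reverse.Joins y x := by
  simpa [Joins, and_comm] using h

lemma qhLen_reverse (γ : Arc n D) (u v : ℝ) :
    γ.reverse.qhLen u v = γ.qhLen (γ.len - v) (γ.len - u) :=
  intervalIntegral.integral_comp_sub_left (fun x => 1 / distBd D (γ.toFun x)) γ.len

lemma IsConeArc.reverse {γ : Arc n D} {c : ℝ} (h : γ.IsConeArc c) : γ.reverse.IsConeArc c := by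
  intro t (ht : t ∈ Icc 0 γ.len)
  have := h (γ.len - t) ⟨by linarith [ht.2], by linarith [ht.1]⟩
  rwa [sub_sub_cancel, min_comm] at this

-- `d` is 1-Lipschitz, so `d(γ t) ≤ d(γ 0) + t`, and `1 / (d(γ 0) + t)` integrates to the log.
lemma log_distBd_sub_le_qhLen (hopen : IsOpen D) (hD : D ≠ univ) (γ : Arc n D) :
    Real.log (distBd D (γ.toFun γ.len)) - Real.log (distBd D (γ.toFun 0)) ≤
      γ.qhLen 0 γ.len := by
  set d₀ := distBd D (γ.toFun 0)
  have h0 : (0 : ℝ) ∈ Icc 0 γ.len := ⟨le_rfl, γ.len_nonneg⟩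
  have hd₀ : 0 < d₀ := distBd_pos hopen hD (γ.mem 0 h0)
  have hgrowth : ∀ t ∈ Icc 0 γ.len, distBd D (γ.toFun t) ≤ d₀ + t := fun t ht => by
    linarith [distBd_le_add_dist D (γ.toFun t) (γ.toFun 0), dist_comm (γ.toFun t) (γ.toFun 0),
      γ.dist_toFun_le h0 ht ht.1]
  have hL : γ.len ∈ Icc 0 γ.len := ⟨γ.len_nonneg, le_rfl⟩
  calc Real.log (distBd D (γ.toFun γ.len)) - Real.log d₀
      ≤ Real.log (d₀ + γ.len) - Real.log d₀ := by
        gcongr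
        exacts [distBd_pos hopen hD (γ.mem _ hL), hgrowth _ hL]
    _ = ∫ t in (0 : ℝ)..γ.len, 1 / (d₀ + t) := by
        rw [intervalIntegral.integral_comp_add_left (fun x => 1 / x), add_zero,
          integral_one_div_of_pos hd₀ (by linarith [γ.len_nonneg]),
          Real.log_div (by linarith [γ.len_nonneg]) hd₀.ne']
    _ ≤ γ.qhLen 0 γ.len := by
        refine intervalIntegral.integral_mono_on γ.len_nonneg ?_
          (γ.intervalIntegrable_inv_distBd hopen hD h0 hL) fun t ht =>
            one_div_le_one_div_of_le (distBd_pos hopen hD (γ.mem t ht)) (hgrowth t ht)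
        refine (continuousOn_const.div (by fun_prop) fun t ht => ?_).intervalIntegrable
        rw [uIcc_of_le γ.len_nonneg] at ht
        exact (show 0 < d₀ + t by linarith [ht.1]).ne'

end Arc

lemma qhDist_nonneg {n : ℕ} (D : Set (EuclideanSpace ℝ (Fin n)))
    (x y : EuclideanSpace ℝ (Fin n)) : 0 ≤ qhDist D x y :=
  Real.sInf_nonneg fun _ ⟨γ, _, hr⟩ => hr ▸ γ.qhLen_nonneg γ.len_nonneg

lemma qhDist_le_qhLen {n : ℕ} {D : Set (EuclideanSpace ℝ (Fin n))} (γ : Arc n D) {u v : ℝ}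
    (hu : u ∈ Icc 0 γ.len) (hv : v ∈ Icc 0 γ.len) (huv : u ≤ v) :
    qhDist D (γ.toFun u) (γ.toFun v) ≤ γ.qhLen u v :=
  csInf_le ⟨0, fun _ ⟨γ, _, hr⟩ => hr ▸ γ.qhLen_nonneg γ.len_nonneg⟩
    ⟨γ.restrict hu hv huv, γ.restrict_joins hu hv huv, (γ.qhLen_restrict hu hv huv).symm⟩

lemma qhDist_symm {n : ℕ} (D : Set (EuclideanSpace ℝ (Fin n)))
    (x y : EuclideanSpace ℝ (Fin n)) : qhDist D x y = qhDist D y x := by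
  have hsub : ∀ x y : EuclideanSpace ℝ (Fin n),
      { r | ∃ γ : Arc n D, γ.Joins x y ∧ r = γ.qhLen 0 γ.len } ⊆
      { r | ∃ γ : Arc n D, γ.Joins y x ∧ r = γ.qhLen 0 γ.len } := by
    rintro x y r ⟨γ, hγ, rfl⟩
    refine ⟨γ.reverse, hγ.reverse, ?_⟩
    rw [Arc.reverse_len, Arc.qhLen_reverse, sub_self, sub_zero]
  unfold qhDist
  rw [(hsub x y).antisymm (hsub y x)]

lemma log_distBd_sub_le_qhDist {n : ℕ} {D : Set (EuclideanSpace ℝ (Fin n))} (hopen : IsOpen D)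
    (hD : D ≠ univ) {x y : EuclideanSpace ℝ (Fin n)} (hxy : ∃ γ : Arc n D, γ.Joins x y) :
    Real.log (distBd D y) - Real.log (distBd D x) ≤ qhDist D x y := by
  obtain ⟨γ₀, hγ₀⟩ := hxy
  refine le_csInf ⟨_, γ₀, hγ₀, rfl⟩ ?_
  rintro r ⟨γ, ⟨rfl, rfl⟩, rfl⟩
  exact γ.log_distBd_sub_le_qhLen hopen hD

namespace Arc

variable {n : ℕ} {D : Set (EuclideanSpace ℝ (Fin n))}

lemma qhLen_le_one_of_sub_le_half (hopen : IsOpen D) (hD : D ≠ univ) (γ : Arc n D) {u v : ℝ}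
    (hu : u ∈ Icc 0 γ.len) (hv : v ∈ Icc 0 γ.len) (huv : u ≤ v)
    (hvu : v - u ≤ distBd D (γ.toFun u) / 2) : γ.qhLen u v ≤ 1 := by
  set d := distBd D (γ.toFun u)
  have hd : 0 < d := distBd_pos hopen hD (γ.mem u hu)
  have hbound : ∀ t ∈ Icc u v, 1 / distBd D (γ.toFun t) ≤ 2 / d := fun t ht => by
    have htγ : t ∈ Icc 0 γ.len := ⟨hu.1.trans ht.1, ht.2.trans hv.2⟩
    rw [div_le_div_iff₀ (distBd_pos hopen hD (γ.mem t htγ)) hd]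
    linarith [distBd_le_add_dist D (γ.toFun u) (γ.toFun t), γ.dist_toFun_le hu htγ ht.1, ht.2]
  calc γ.qhLen u v ≤ ∫ _ in u..v, 2 / d :=
        intervalIntegral.integral_mono_on huv (γ.intervalIntegrable_inv_distBd hopen hD hu hv)
          intervalIntegrable_const hbound
    _ = (v - u) * (2 / d) := by rw [intervalIntegral.integral_const, smul_eq_mul]
    _ ≤ 1 := by
        rw [mul_div_assoc', div_le_one hd]
        linarith

lemma qhLen_le_mul_log_div (hopen : IsOpen D) (hD : D ≠ univ) (γ : Arc n D) {c u v : ℝ}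
    (hu : 0 < u) (hv : v ∈ Icc 0 γ.len) (huv : u ≤ v)
    (hcone : ∀ t ∈ Icc u v, t ≤ c * distBd D (γ.toFun t)) :
    γ.qhLen u v ≤ c * Real.log (v / u) := by
  have hbound : ∀ t ∈ Icc u v, 1 / distBd D (γ.toFun t) ≤ c * (1 / t) := fun t ht => by
    have htγ : t ∈ Icc 0 γ.len := ⟨hu.le.trans ht.1, ht.2.trans hv.2⟩
    rw [mul_one_div, div_le_div_iff₀ (distBd_pos hopen hD (γ.mem t htγ)) (hu.trans_le ht.1)]
    linarith [hcone t ht]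
  have hint : IntervalIntegrable (fun t : ℝ => c * (1 / t)) volume u v :=
    ((continuousOn_const.div continuousOn_id fun t ht =>
      (hu.trans_le (uIcc_of_le huv ▸ ht).1).ne').intervalIntegrable).const_mul c
  calc γ.qhLen u v ≤ ∫ t in u..v, c * (1 / t) :=
        intervalIntegral.integral_mono_on huv
          (γ.intervalIntegrable_inv_distBd hopen hD ⟨hu.le, huv.trans hv.2⟩ hv) hint hbound
    _ = c * Real.log (v / u) := by
        rw [intervalIntegral.integral_const_mul, integral_one_div_of_pos hu (hu.trans_le huv)]

theorem qhLen_le_of_le_mul_distBd (hopen : IsOpen D) (hD : D ≠ univ) (γ : Arc n D)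
    {c s₁ s₂ : ℝ} (hc : 1 ≤ c) (hs₁ : 0 ≤ s₁) (hs₂ : s₂ ∈ Icc 0 γ.len) (h12 : s₁ ≤ s₂)
    (hcone : ∀ t ∈ Icc s₁ s₂, t ≤ c * distBd D (γ.toFun t)) :
    γ.qhLen s₁ s₂ ≤
      4 * c ^ 2 * qhDist D (γ.toFun s₁) (γ.toFun s₂) + 4 * c ^ 2 := by
  have hs₁γ : s₁ ∈ Icc 0 γ.len := ⟨hs₁, h12.trans hs₂.2⟩
  set d₁ := distBd D (γ.toFun s₁)
  set d₂ := distBd D (γ.toFun s₂)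
  set k := qhDist D (γ.toFun s₁) (γ.toFun s₂)
  have hd₁ : 0 < d₁ := distBd_pos hopen hD (γ.mem s₁ hs₁γ)
  have hd₂ : 0 < d₂ := distBd_pos hopen hD (γ.mem s₂ hs₂)
  have hk : 0 ≤ k := qhDist_nonneg D _ _
  have hlog2c : Real.log (2 * c) ≤ 2 * c - 1 := Real.log_le_sub_one_of_pos (by linarith)
  suffices γ.qhLen s₁ s₂ ≤ 1 + c * (Real.log (2 * c) + k) by
    nlinarith [mul_le_mul_of_nonneg_left hlog2c (by linarith : (0 : ℝ) ≤ c),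
      mul_nonneg hk (by nlinarith : (0 : ℝ) ≤ 4 * c ^ 2 - c)]
  rcases le_or_gt (s₂ - s₁) (d₁ / 2) with hshort | hlong
  · have := γ.qhLen_le_one_of_sub_le_half hopen hD hs₁γ hs₂ h12 hshort
    have := Real.log_nonneg (by linarith : (1 : ℝ) ≤ 2 * c)
    nlinarith
  set m := s₁ + d₁ / 2
  have hm0 : d₁ / 2 ≤ m := by simp only [m]; linarith
  have hs₁m : s₁ ≤ m := by simp only [m]; linarith
  have hms₂ : m ≤ s₂ := by simp only [m]; linarith
  have hmγ : m ∈ Icc 0 γ.len := ⟨by linarith, by linarith [hs₂.2]⟩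
  have h₁ : γ.qhLen s₁ m ≤ 1 :=
    γ.qhLen_le_one_of_sub_le_half hopen hD hs₁γ hmγ hs₁m (by simp only [m]; linarith)
  have h₂ : γ.qhLen m s₂ ≤ c * Real.log (s₂ / m) :=
    γ.qhLen_le_mul_log_div hopen hD (by linarith) hs₂ hms₂ fun t ht =>
      hcone t ⟨hs₁m.trans ht.1, ht.2⟩
  have hlog : Real.log (s₂ / m) ≤ Real.log (2 * c) + k := by
    have hs₂m : s₂ / m ≤ 2 * c * (d₂ / d₁) := by
      rw [div_le_iff₀ (by linarith)]
      calc s₂ ≤ c * d₂ := hcone s₂ ⟨h12, le_rfl⟩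
        _ = 2 * c * (d₂ / d₁) * (d₁ / 2) := by field_simp
        _ ≤ 2 * c * (d₂ / d₁) * m := by gcongr
    calc Real.log (s₂ / m) ≤ Real.log (2 * c * (d₂ / d₁)) :=
          Real.log_le_log (div_pos (by linarith) (by linarith)) hs₂m
      _ = Real.log (2 * c) + (Real.log d₂ - Real.log d₁) := by
          rw [Real.log_mul (by positivity) (by positivity), Real.log_div hd₂.ne' hd₁.ne']
      _ ≤ Real.log (2 * c) + k := by
          gcongr
          exact log_distBd_sub_le_qhDist hopen hD ⟨_, γ.restrict_joins hs₁γ hs₂ h12⟩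
  rw [← γ.qhLen_add hopen hD hs₁γ hmγ hs₂]
  nlinarith [mul_le_mul_of_nonneg_left hlog (by linarith : (0 : ℝ) ≤ c)]

theorem qhLen_le_of_isConeArc_of_le_len_sub (hopen : IsOpen D) (hD : D ≠ univ) (γ : Arc n D)
    {a s₁ s₂ : ℝ} (ha : 1 ≤ a) (hcone : γ.IsConeArc a) (hs₁ : 0 ≤ s₁) (h12 : s₁ ≤ s₂)
    (hs₂ : s₂ ≤ γ.len - s₂) :
    γ.qhLen s₁ s₂ ≤ 4 * a ^ 2 * qhDist D (γ.toFun s₁) (γ.toFun s₂) + 4 * a ^ 2 := by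
  refine γ.qhLen_le_of_le_mul_distBd hopen hD ha hs₁ ⟨by linarith, by linarith⟩ h12
    fun t ht => ?_
  have := hcone t ⟨by linarith [ht.1], by linarith [ht.2]⟩
  rwa [min_eq_left (by linarith [ht.2])] at this

end Arc

theorem lemma_3_13_general (n : ℕ) (a : ℝ) (ha : 1 ≤ a)
    (D : Set (EuclideanSpace ℝ (Fin n))) (hD : IsProperDomain D)
    (α : Arc n D)
    (hcone : α.IsConeArc a)
    (t₀ : ℝ) (hbis : t₀ = α.len - t₀) :
    (∀ s₁ ∈ Icc (0:ℝ) t₀, ∀ s₂ ∈ Icc (0:ℝ) t₀, s₁ ≤ s₂ →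
      qhDist D (α.toFun s₁) (α.toFun s₂) ≤ α.qhLen s₁ s₂ ∧
      α.qhLen s₁ s₂ ≤ 4 * a ^ 2 * qhDist D (α.toFun s₁) (α.toFun s₂) + 4 * a ^ 2) ∧
    (∀ s₁ ∈ Icc t₀ α.len, ∀ s₂ ∈ Icc t₀ α.len, s₁ ≤ s₂ →
      qhDist D (α.toFun s₁) (α.toFun s₂) ≤ α.qhLen s₁ s₂ ∧
      α.qhLen s₁ s₂ ≤ 4 * a ^ 2 * qhDist D (α.toFun s₁) (α.toFun s₂) + 4 * a ^ 2) := by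
  obtain ⟨hopen, -, hD⟩ := hD
  have hlen := α.len_nonneg
  refine ⟨fun s₁ hs₁ s₂ hs₂ h12 => ⟨?_, ?_⟩, fun s₁ hs₁ s₂ hs₂ h12 => ⟨?_, ?_⟩⟩
  · exact qhDist_le_qhLen α ⟨hs₁.1, by linarith [hs₁.2]⟩ ⟨hs₂.1, by linarith [hs₂.2]⟩ h12
  · exact α.qhLen_le_of_isConeArc_of_le_len_sub hopen hD ha hcone hs₁.1 h12 (by linarith [hs₂.2])
  · exact qhDist_le_qhLen α ⟨by linarith [hs₁.1], hs₁.2⟩ ⟨by linarith [hs₂.1], hs₂.2⟩ h12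
  have h := α.reverse.qhLen_le_of_isConeArc_of_le_len_sub hopen hD ha hcone.reverse
    (s₁ := α.len - s₂) (s₂ := α.len - s₁) (by linarith [hs₂.2]) (by linarith)
    (by simp only [Arc.reverse_len]; linarith [hs₁.1])
  simpa only [Arc.reverse_toFun, Arc.qhLen_reverse, sub_sub_cancel,
    qhDist_symm D (α.toFun s₂)] using h

/-- **Lemma 3.13.** Let `D ⊊ ℝⁿ` (`n ≥ 2`) be a domain, `α` an `a`-cone arc (`a ≥ 1`)
joining `x` and `y` in `D`, and let `s₀ = α(t₀)` bisect `α`.  Then for all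
`s₁, s₂ ∈ α[x,s₀]` (and likewise for all `s₁, s₂ ∈ α[s₀,y]`):
`k_D(s₁,s₂) ≤ ℓ_k(α[s₁,s₂]) ≤ 4a²·k_D(s₁,s₂) + 4a²`. -/
theorem lemma_3_13 (n : ℕ) (hn : 2 ≤ n) (a : ℝ) (ha : 1 ≤ a)
    (D : Set (EuclideanSpace ℝ (Fin n))) (hD : IsProperDomain D)
    (α : Arc n D) (x y : EuclideanSpace ℝ (Fin n)) (hxy : α.Joins x y)
    (hcone : α.IsConeArc a)
    (t₀ : ℝ) (ht₀ : t₀ ∈ Icc (0:ℝ) α.len) (hbis : t₀ = α.len - t₀) :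
    (∀ s₁ ∈ Icc (0:ℝ) t₀, ∀ s₂ ∈ Icc (0:ℝ) t₀, s₁ ≤ s₂ →
      qhDist D (α.toFun s₁) (α.toFun s₂) ≤ α.qhLen s₁ s₂ ∧
      α.qhLen s₁ s₂ ≤ 4 * a ^ 2 * qhDist D (α.toFun s₁) (α.toFun s₂) + 4 * a ^ 2) ∧
    (∀ s₁ ∈ Icc t₀ α.len, ∀ s₂ ∈ Icc t₀ α.len, s₁ ≤ s₂ →
      qhDist D (α.toFun s₁) (α.toFun s₂) ≤ α.qhLen s₁ s₂ ∧
      α.qhLen s₁ s₂ ≤ 4 * a ^ 2 * qhDist D (α.toFun s₁) (α.toFun s₂) + 4 * a ^ 2) :=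
  lemma_3_13_general n a ha D hD α hcone t₀ hbis
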